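/- Let K be a real valued field and I ⊂ J ⊂ K{x}^N submodules. If the leading modules coincide, L(I) = L(J), then I = J. -/

import Mathlib

/-!
Take a standard basis `S` of `I`: finitely many elements whose leading monomials generate `L(I)`
(they exist since `K[x]^N` is noetherian). Dividing `g ∈ J` by `S` gives `g = ∑ qⱼ Sⱼ + r` with
convergent `qⱼ, r` such that no monomial of `r` is divisible by a leading monomial `LM(Sⱼ)`.
Then `r ∈ J`; if `r ≠ 0`, its leading monomial lies in `L(J) = L(I)` and is therefore divisible by
some `LM(Sⱼ)`, which is impossible. So `r = 0` and `g ∈ I`.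

The division repeatedly moves the terms divisible by some `LM(Sⱼ)` into the quotient, replacing
them by the corresponding multiple of `LT(Sⱼ) - Sⱼ`. Each monomial has finitely many
predecessors in the local degree ordering and the terms only move down, so every coefficient
stabilises. For convergence, give `xᵢ` the weight `ε₀ᵢ tᶜⁱ` and `eₖ` the weight `tᵏ`, where
`cᵢ` are chosen so that `∑ cᵢ βᵢ + k` strictly increases from each `LM(Sⱼ)` to the monomials
of its tail: for small `t` every tail is small against its leading term, and each step halves
the weighted norm.
-/

open MvPowerSeries Finsupp ENNReal

namespace GrauertRVF

variable {K : Type} [Field K]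

/-- total degree of a multi-exponent -/
def deg {σ : Type} (d : σ →₀ ℕ) : ℕ := d.sum fun _ k => k

/-- the `ε`-norm `‖f‖_ε = Σ_d |c_d| ε^d` of a formal power series (value in `ℝ≥0∞`). -/
noncomputable def wnorm {σ : Type} [Fintype σ] (abv : AbsoluteValue K ℝ) (ε : σ → ℝ)
    (f : MvPowerSeries σ K) : ℝ≥0∞ :=
  ∑' d : σ →₀ ℕ, ENNReal.ofReal (abv (MvPowerSeries.coeff d f) * ∏ i, ε i ^ d i)

/-- the `ε`-norm of a vector of formal power series. -/
noncomputable def vnorm {σ : Type} [Fintype σ] {N : ℕ} (abv : AbsoluteValue K ℝ) (ε : σ → ℝ)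
    (f : Fin N → MvPowerSeries σ K) : ℝ≥0∞ :=
  ∑ k, wnorm abv ε (f k)

/-- `f` is a convergent power series. -/
def IsConv {σ : Type} [Fintype σ] (abv : AbsoluteValue K ℝ) (f : MvPowerSeries σ K) : Prop :=
  ∃ ε : σ → ℝ, (∀ i, 0 < ε i) ∧ wnorm abv ε f < ⊤

/-- `f` is a convergent vector of power series. -/
def IsConvV {σ : Type} [Fintype σ] {N : ℕ} (abv : AbsoluteValue K ℝ) (f : Fin N → MvPowerSeries σ K) : Prop :=
  ∃ ε : σ → ℝ, (∀ i, 0 < ε i) ∧ vnorm abv ε f < ⊤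

/-- `x^α > x^β` in the local degree ordering deglex. -/
def MonGT {n : ℕ} (α β : Fin n →₀ ℕ) : Prop :=
  deg α < deg β ∨ (deg α = deg β ∧ ∃ l : Fin n, (∀ j : Fin n, j < l → α j = β j) ∧ α l < β l)

/-- module monomial ordering: `x^α e_i > x^β e_j` iff `x^α > x^β`, or `α = β` and `i < j`. -/
def MMonGT {n N : ℕ} (p q : (Fin n →₀ ℕ) × Fin N) : Prop :=
  MonGT p.1 q.1 ∨ (p.1 = q.1 ∧ p.2 < q.2)

/-- `x^α e_i` divides `x^β e_j` iff `i = j` and `x^α ∣ x^β`. -/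
def MMonDvd {n N : ℕ} (p q : (Fin n →₀ ℕ) × Fin N) : Prop :=
  p.2 = q.2 ∧ p.1 ≤ q.1

/-- `p` is the leading monomial of the vector `f` of power series. -/
def IsLM {n N : ℕ} (f : Fin N → MvPowerSeries (Fin n) K) (p : (Fin n →₀ ℕ) × Fin N) : Prop :=
  MvPowerSeries.coeff p.1 (f p.2) ≠ 0 ∧
    ∀ q : (Fin n →₀ ℕ) × Fin N, MvPowerSeries.coeff q.1 (f q.2) ≠ 0 → q = p ∨ MMonGT p q

/-- `α` is the leading monomial of the power series `f`. -/
def IsLM1 {n : ℕ} (f : MvPowerSeries (Fin n) K) (α : Fin n →₀ ℕ) : Prop :=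
  MvPowerSeries.coeff α f ≠ 0 ∧
    ∀ β : Fin n →₀ ℕ, MvPowerSeries.coeff β f ≠ 0 → β = α ∨ MonGT α β

/-- the tail `f - LT(f)` of `f`, where `p` is the leading monomial of `f`. -/
noncomputable def tailOf {n N : ℕ} (f : Fin N → MvPowerSeries (Fin n) K)
    (p : (Fin n →₀ ℕ) × Fin N) : Fin N → MvPowerSeries (Fin n) K :=
  fun k => if k = p.2 then
    f k - (MvPowerSeries.monomial p.1) (MvPowerSeries.coeff p.1 (f k)) else f k

/-- formal substitution: `subst Φ f = f(Φ)`; meaningful when each `Φ j` has zero constant term. -/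
noncomputable def subst {σ τ : Type} [Fintype σ] [DecidableEq σ] [Fintype τ] [DecidableEq τ]
    (Φ : σ → MvPowerSeries τ K) (f : MvPowerSeries σ K) : MvPowerSeries τ K :=
  fun e => ∑ d ∈ Finset.Iic (Finsupp.equivFunOnFinite.symm fun _ : σ => deg e),
    MvPowerSeries.coeff d f * MvPowerSeries.coeff e (∏ j, Φ j ^ d j)

/-- every monomial of `f` has total degree at least `l`, i.e. `f ∈ 𝔪^l`. -/
def OrderGE {σ : Type} [Fintype σ] (l : ℕ) (f : MvPowerSeries σ K) : Prop :=
  ∀ d, MvPowerSeries.coeff d f ≠ 0 → l ≤ deg d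

/-- formal partial derivative `∂f/∂x_i`. -/
noncomputable def pd {n : ℕ} (i : Fin n) (f : MvPowerSeries (Fin n) K) :
    MvPowerSeries (Fin n) K :=
  fun d => (((d i) + 1 : ℕ) : K) * MvPowerSeries.coeff (d + Finsupp.single i 1) f

/-- the Hessian matrix `(∂²f/∂x_i∂x_j(0))`. -/
noncomputable def hess {n : ℕ} (f : MvPowerSeries (Fin n) K) : Matrix (Fin n) (Fin n) K :=
  Matrix.of fun i j => if i = j then 2 * MvPowerSeries.coeff (Finsupp.single i 2) f
    else MvPowerSeries.coeff (Finsupp.single i 1 + Finsupp.single j 1) f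

/-- right equivalence: `g = φ(f)` for a `K`-algebra automorphism `φ` of `K{x}`,
given by a convergent coordinate change `Φ` with zero constant terms and
invertible linear part. -/
def RightEquiv {n : ℕ} (abv : AbsoluteValue K ℝ) (f g : MvPowerSeries (Fin n) K) : Prop :=
  ∃ Φ : Fin n → MvPowerSeries (Fin n) K,
    (∀ i, IsConv abv (Φ i)) ∧
    (∀ i, MvPowerSeries.constantCoeff (Φ i) = 0) ∧
    (Matrix.of fun i j => MvPowerSeries.coeff (Finsupp.single j 1) (Φ i)).det ≠ 0 ∧
    subst Φ f = g

/-- contact equivalence: `g = u·φ(f)` for an automorphism `φ` and a unit `u` of `K{x}`. -/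
def ContactEquiv {n : ℕ} (abv : AbsoluteValue K ℝ) (f g : MvPowerSeries (Fin n) K) : Prop :=
  ∃ (Φ : Fin n → MvPowerSeries (Fin n) K) (u : MvPowerSeries (Fin n) K),
    (∀ i, IsConv abv (Φ i)) ∧
    (∀ i, MvPowerSeries.constantCoeff (Φ i) = 0) ∧
    (Matrix.of fun i j => MvPowerSeries.coeff (Finsupp.single j 1) (Φ i)).det ≠ 0 ∧
    IsConv abv u ∧ MvPowerSeries.constantCoeff u ≠ 0 ∧
    u * subst Φ f = g

/-- the `x`-part of a mixed exponent. -/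
noncomputable def xpart {n q : ℕ} (d : (Fin n ⊕ Fin q) →₀ ℕ) : Fin n →₀ ℕ :=
  Finsupp.equivFunOnFinite.symm fun i => d (Sum.inl i)

/-- the `s`-part of a mixed exponent. -/
noncomputable def spart {n q : ℕ} (d : (Fin n ⊕ Fin q) →₀ ℕ) : Fin q →₀ ℕ :=
  Finsupp.equivFunOnFinite.symm fun j => d (Sum.inr j)

/-- the degree in the second block of variables. -/
def sdeg {n q : ℕ} (d : (Fin n ⊕ Fin q) →₀ ℕ) : ℕ := ∑ j : Fin q, d (Sum.inr j)

/-- `g` involves only the first block of variables. -/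
def OnlyX {n q : ℕ} (g : MvPowerSeries (Fin n ⊕ Fin q) K) : Prop :=
  ∀ d, MvPowerSeries.coeff d g ≠ 0 → ∀ j : Fin q, d (Sum.inr j) = 0

/-- `g` involves only the second block of variables. -/
def OnlyS {n q : ℕ} (g : MvPowerSeries (Fin n ⊕ Fin q) K) : Prop :=
  ∀ d, MvPowerSeries.coeff d g ≠ 0 → ∀ i : Fin n, d (Sum.inl i) = 0

/-- `g` is homogeneous of degree `e` in the second block of variables. -/
def SHomog {n q : ℕ} (e : ℕ) (g : MvPowerSeries (Fin n ⊕ Fin q) K) : Prop :=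
  ∀ d, MvPowerSeries.coeff d g ≠ 0 → sdeg d = e

/-- `g` is a polynomial of degree `≤ e` in the second block of variables. -/
def SDegLE {n q : ℕ} (e : ℕ) (g : MvPowerSeries (Fin n ⊕ Fin q) K) : Prop :=
  ∀ d, MvPowerSeries.coeff d g ≠ 0 → sdeg d ≤ e

/-- `g` has order `≥ l` in the second block of variables, i.e. `g ∈ 𝔪_s^l·K[[x,s]]`. -/
def SOrderGE {n q : ℕ} (l : ℕ) (g : MvPowerSeries (Fin n ⊕ Fin q) K) : Prop :=
  ∀ d, MvPowerSeries.coeff d g ≠ 0 → l ≤ sdeg d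

/-- a polynomial regarded as a power series. -/
def polyToPS {n : ℕ} (p : MvPolynomial (Fin n) K) : MvPowerSeries (Fin n) K :=
  fun d => MvPolynomial.coeff d p

/-- inclusion `K{x} → K{x,s}`. -/
noncomputable def inclX {n q : ℕ} (f : MvPowerSeries (Fin n) K) :
    MvPowerSeries (Fin n ⊕ Fin q) K :=
  subst (fun i => MvPowerSeries.X (Sum.inl i)) f

/-- inclusion `K{s} → K{x,s}`. -/
noncomputable def inclS {n q : ℕ} (f : MvPowerSeries (Fin q) K) :
    MvPowerSeries (Fin n ⊕ Fin q) K :=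
  subst (fun j => MvPowerSeries.X (Sum.inr j)) f

/-- `I` is a submodule of `K{x}^N` over `K{x}`: a set of convergent power series vectors
containing `0`, closed under addition and under multiplication by convergent scalars. -/
def IsConvSubmodule {K : Type} [Field K] (abv : AbsoluteValue K ℝ) {n N : ℕ}
    (I : Set (Fin N → MvPowerSeries (Fin n) K)) : Prop :=
  (0 ∈ I) ∧ (∀ g ∈ I, IsConvV abv g) ∧ (∀ g ∈ I, ∀ h ∈ I, g + h ∈ I) ∧
  (∀ a : MvPowerSeries (Fin n) K, IsConv abv a → ∀ g ∈ I, (fun k => a * g k) ∈ I)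

/-- `S` is a standard basis of the submodule `I ⊆ K{x}^N`:  `S ⊆ I ∖ {0}` and every
leading monomial of a nonzero element of `I` is divisible by some `LM(S j)`. -/
def IsStdBasis {K : Type} [Field K] (abv : AbsoluteValue K ℝ) {n N m : ℕ}
    (I : Set (Fin N → MvPowerSeries (Fin n) K))
    (S : Fin m → Fin N → MvPowerSeries (Fin n) K) : Prop :=
  (∀ j, S j ∈ I) ∧ (∀ j, S j ≠ 0) ∧
  ∀ g ∈ I, g ≠ 0 → ∀ p : (Fin n →₀ ℕ) × Fin N, IsLM g p →
    ∃ j, ∃ p' : (Fin n →₀ ℕ) × Fin N, IsLM (S j) p' ∧ MMonDvd p' p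

/-- `r` is the remainder (normal form) of the Grauert division of `g` by the ordered
tuple `S` in `K{x}^N`: `g = Σ_j q_j S_j + r` with convergent `q_j`, `r`, and no monomial
of `r` is divisible by any `LM(S j)`. -/
def IsRemainder {K : Type} [Field K] (abv : AbsoluteValue K ℝ) {n N m : ℕ}
    (S : Fin m → Fin N → MvPowerSeries (Fin n) K)
    (g r : Fin N → MvPowerSeries (Fin n) K) : Prop :=
  (∃ q : Fin m → MvPowerSeries (Fin n) K, (∀ j, IsConv abv (q j)) ∧
    g = (fun k => ∑ j, q j * S j k) + r) ∧
  IsConvV abv r ∧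
  ∀ p : (Fin n →₀ ℕ) × Fin N, MvPowerSeries.coeff p.1 (r p.2) ≠ 0 →
    ∀ j (p' : (Fin n →₀ ℕ) × Fin N), IsLM (S j) p' → ¬ MMonDvd p' p

/-- the leading module `L(T)`: the `K[x]`-submodule of `K[x]^N` generated by the leading
monomials of the nonzero elements of `T`. -/
noncomputable def leadingModule {K : Type} [Field K] {n N : ℕ}
    (T : Set (Fin N → MvPowerSeries (Fin n) K)) :
    Submodule (MvPolynomial (Fin n) K) (Fin N → MvPolynomial (Fin n) K) :=
  Submodule.span _ {v | ∃ g ∈ T, ∃ p : (Fin n →₀ ℕ) × Fin N, IsLM g p ∧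
    v = Pi.single p.2 ((MvPolynomial.monomial p.1) (1 : K))}

variable {n N : ℕ}

lemma deg_eq_sum (α : Fin n →₀ ℕ) : deg α = ∑ i, α i := Finsupp.degree_eq_sum α

def orderKey (p : (Fin n →₀ ℕ) × Fin N) : (ℕ ×ₗ Lex (Fin n →₀ ℕ)) ×ₗ Fin N :=
  toLex (toLex (deg p.1, toLex p.1), p.2)

lemma orderKey_injective : Function.Injective (orderKey : (Fin n →₀ ℕ) × Fin N → _) := by
  intro p q h
  simp only [orderKey, toLex_inj, Prod.mk.injEq] at h
  exact Prod.ext h.1.2 h.2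

lemma monGT_iff (α β : Fin n →₀ ℕ) :
    MonGT α β ↔ toLex (deg α, toLex α) < toLex (deg β, toLex β) := by
  rw [Prod.Lex.toLex_lt_toLex, MonGT, Finsupp.Lex.lt_iff]
  rfl

lemma mmonGT_iff_orderKey_lt (p q : (Fin n →₀ ℕ) × Fin N) :
    MMonGT p q ↔ orderKey p < orderKey q := by
  rw [orderKey, orderKey, Prod.Lex.toLex_lt_toLex, MMonGT, monGT_iff]
  simp only [toLex_inj, Prod.mk.injEq]
  constructor
  · rintro (h | ⟨h, h'⟩)
    exacts [Or.inl h, Or.inr ⟨⟨by rw [h], h⟩, h'⟩]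
  · rintro (h | ⟨⟨-, h⟩, h'⟩)
    exacts [Or.inl h, Or.inr ⟨h, h'⟩]

lemma MMonGT.trans {p q r : (Fin n →₀ ℕ) × Fin N} (hpq : MMonGT p q) (hqr : MMonGT q r) :
    MMonGT p r := by
  rw [mmonGT_iff_orderKey_lt] at *
  exact hpq.trans hqr

lemma MMonGT.irrefl (p : (Fin n →₀ ℕ) × Fin N) : ¬ MMonGT p p := by
  simp [mmonGT_iff_orderKey_lt]

lemma mmonGT_or_mmonGT_of_ne {p q : (Fin n →₀ ℕ) × Fin N} (h : p ≠ q) :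
    MMonGT p q ∨ MMonGT q p := by
  simpa only [mmonGT_iff_orderKey_lt] using lt_or_gt_of_ne (orderKey_injective.ne h)

lemma MMonGT.add_left {p q : (Fin n →₀ ℕ) × Fin N} (h : MMonGT p q) (γ : Fin n →₀ ℕ) :
    MMonGT (γ + p.1, p.2) (γ + q.1, q.2) := by
  have hdeg (α : Fin n →₀ ℕ) : deg (γ + α) = deg γ + deg α := map_add Finsupp.degree γ α
  rcases h with (h | ⟨hd, l, hl, hlt⟩) | ⟨hpq, hlt⟩
  · exact Or.inl (Or.inl (by simp only [hdeg]; omega))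
  · refine Or.inl (Or.inr ⟨by simp only [hdeg, hd], l, fun j hj => ?_, ?_⟩)
    · simp [hl j hj]
    · simpa using hlt
  · exact Or.inr ⟨by rw [hpq], hlt⟩

lemma MMonGT.deg_le {p q : (Fin n →₀ ℕ) × Fin N} (h : MMonGT p q) : deg p.1 ≤ deg q.1 := by
  rcases h with (h | ⟨h, -⟩) | ⟨h, -⟩
  exacts [h.le, h.le, h ▸ le_rfl]

lemma finite_setOf_mmonGT (p : (Fin n →₀ ℕ) × Fin N) : {q | MMonGT q p}.Finite :=
  ((Finsupp.finite_of_degree_le (deg p.1)).prod Set.finite_univ).subset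
    fun _ hq => ⟨MMonGT.deg_le hq, trivial⟩

noncomputable def rank (p : (Fin n →₀ ℕ) × Fin N) : ℕ := {q | MMonGT q p}.ncard

lemma rank_lt_rank {p q : (Fin n →₀ ℕ) × Fin N} (h : MMonGT q p) : rank q < rank p :=
  Set.ncard_lt_ncard ⟨fun _ hr => MMonGT.trans hr h, fun hsub => MMonGT.irrefl q (hsub h)⟩
    (finite_setOf_mmonGT p)

lemma IsLM.ne_zero {f : Fin N → MvPowerSeries (Fin n) K} {p : (Fin n →₀ ℕ) × Fin N}
    (h : IsLM f p) : f ≠ 0 := by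
  rintro rfl
  exact h.1 (by simp)

lemma exists_isLM {f : Fin N → MvPowerSeries (Fin n) K} (hf : f ≠ 0) : ∃ p, IsLM f p := by
  set s := {p : (Fin n →₀ ℕ) × Fin N | MvPowerSeries.coeff p.1 (f p.2) ≠ 0}
  have hs : s.Nonempty := by
    by_contra! h
    exact hf (funext fun k => MvPowerSeries.ext fun d => by
      simpa [s] using Set.eq_empty_iff_forall_notMem.1 h (d, k))
  obtain ⟨p, hp, hmin⟩ := (measure rank).wf.has_min s hs
  refine ⟨p, hp, fun q hq => ?_⟩
  by_cases hqp : q = p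
  · exact Or.inl hqp
  · exact Or.inr ((mmonGT_or_mmonGT_of_ne hqp).symm.resolve_right
      fun h => hmin q hq (rank_lt_rank h))

lemma IsLM.unique {f : Fin N → MvPowerSeries (Fin n) K} {p p' : (Fin n →₀ ℕ) × Fin N}
    (h : IsLM f p) (h' : IsLM f p') : p = p' := by
  rcases h.2 p' h'.1 with rfl | hpp'
  · rfl
  rcases h'.2 p h.1 with rfl | hp'p
  · rfl
  exact (MMonGT.irrefl p (hpp'.trans hp'p)).elim

lemma coeff_tailOf (f : Fin N → MvPowerSeries (Fin n) K) (p q : (Fin n →₀ ℕ) × Fin N) :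
    MvPowerSeries.coeff q.1 (tailOf f p q.2) =
      if q = p then 0 else MvPowerSeries.coeff q.1 (f q.2) := by
  obtain ⟨β, k⟩ := q
  by_cases hk : k = p.2
  · subst hk
    by_cases hβ : β = p.1
    · subst hβ
      simp [tailOf]
    · simp [tailOf, MvPowerSeries.coeff_monomial, hβ, Prod.ext_iff]
  · simp [tailOf, hk, Prod.ext_iff]

lemma IsLM.mmonGT_of_coeff_tailOf_ne_zero {f : Fin N → MvPowerSeries (Fin n) K}
    {p q : (Fin n →₀ ℕ) × Fin N} (hf : IsLM f p)
    (hq : MvPowerSeries.coeff q.1 (tailOf f p q.2) ≠ 0) : MMonGT p q := by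
  rw [coeff_tailOf] at hq
  split_ifs at hq with hqp
  · exact (hq rfl).elim
  · exact (hf.2 q hq).resolve_left hqp

lemma MMonDvd.trans {p q r : (Fin n →₀ ℕ) × Fin N} (hpq : MMonDvd p q) (hqr : MMonDvd q r) :
    MMonDvd p r :=
  ⟨hpq.1.trans hqr.1, hpq.2.trans hqr.2⟩

noncomputable def monomialVec (p : (Fin n →₀ ℕ) × Fin N) : Fin N → MvPolynomial (Fin n) K :=
  Pi.single p.2 (MvPolynomial.monomial p.1 1)

lemma leadingModule_eq_span (T : Set (Fin N → MvPowerSeries (Fin n) K)) :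
    leadingModule T = Submodule.span _ (monomialVec '' {p | ∃ g ∈ T, IsLM g p}) := by
  rw [leadingModule]
  congr 1
  ext v
  constructor
  · rintro ⟨g, hg, p, hp, rfl⟩
    exact ⟨p, ⟨g, hg, hp⟩, rfl⟩
  · rintro ⟨p, ⟨g, hg, hp⟩, rfl⟩
    exact ⟨g, hg, p, hp, rfl⟩

/-- Project to the component of `p` and use the case of monomial ideals. -/
lemma exists_mmonDvd_of_monomialVec_mem_span {G : Set ((Fin n →₀ ℕ) × Fin N)}
    {p : (Fin n →₀ ℕ) × Fin N}
    (h : monomialVec (K := K) p ∈ Submodule.span (MvPolynomial (Fin n) K) (monomialVec '' G)) :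
    ∃ q ∈ G, MMonDvd q p := by
  set π : (Fin N → MvPolynomial (Fin n) K) →ₗ[MvPolynomial (Fin n) K] MvPolynomial (Fin n) K :=
    LinearMap.proj p.2
  have hproj := Submodule.mem_map_of_mem (f := π) h
  rw [Submodule.map_span] at hproj
  have hsub : π '' (monomialVec '' G) ⊆
      insert 0 ((fun β => MvPolynomial.monomial β (1 : K)) ''
        {β | ∃ q ∈ G, q.2 = p.2 ∧ q.1 = β}) := by
    rintro _ ⟨_, ⟨q, hq, rfl⟩, rfl⟩
    by_cases hq2 : q.2 = p.2
    · exact Or.inr ⟨q.1, ⟨q, hq, hq2, rfl⟩, by simp [π, monomialVec, hq2]⟩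
    · exact Or.inl (by simp [π, monomialVec, Ne.symm hq2])
  have hmem := Submodule.span_mono hsub hproj
  rw [Submodule.span_insert_zero] at hmem
  obtain ⟨_, ⟨q, hq, hq2, rfl⟩, hle⟩ :=
    MvPolynomial.mem_ideal_span_monomial_image.1 hmem p.1 (by simp [π, monomialVec])
  exact ⟨q, hq, hq2, hle⟩

lemma exists_isStdBasis (abv : AbsoluteValue K ℝ) (I : Set (Fin N → MvPowerSeries (Fin n) K)) :
    ∃ (m : ℕ) (S : Fin m → Fin N → MvPowerSeries (Fin n) K), IsStdBasis abv I S := by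
  classical
  set G := {p : (Fin n →₀ ℕ) × Fin N | ∃ g ∈ I, IsLM g p}
  obtain ⟨F, hFG, hF⟩ : ∃ F : Finset ((Fin n →₀ ℕ) × Fin N), ↑F ⊆ G ∧
      leadingModule I ≤ Submodule.span _ (monomialVec '' (F : Set _)) := by
    obtain ⟨T, hT, hspan⟩ := Submodule.fg_def.1 (IsNoetherian.noetherian (leadingModule I))
    obtain ⟨T', hT'G, hTT'⟩ := Submodule.subset_span_finite_of_subset_span
      (s := monomialVec '' G) (t := hT.toFinset) (by
        rw [hT.coe_toFinset, ← leadingModule_eq_span, ← hspan]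
        exact Submodule.subset_span)
    obtain ⟨F, hFG, rfl⟩ := Finset.subset_set_image_iff.1 hT'G
    refine ⟨F, hFG, ?_⟩
    rw [← hspan, Submodule.span_le, ← hT.coe_toFinset, ← Finset.coe_image]
    exact hTT'
  have hwit (j : Fin F.card) : ∃ g ∈ I, IsLM g (F.equivFin.symm j) := hFG (F.equivFin.symm j).2
  choose S hSI hSLM using hwit
  refine ⟨F.card, S, hSI, fun j => (hSLM j).ne_zero, fun g hg _ p hp => ?_⟩
  obtain ⟨q, hqF, hqp⟩ := exists_mmonDvd_of_monomialVec_mem_span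
    (hF (by rw [leadingModule_eq_span]; exact Submodule.subset_span ⟨p, ⟨g, hg, hp⟩, rfl⟩))
  exact ⟨F.equivFin ⟨q, hqF⟩, q, by simpa using hSLM (F.equivFin ⟨q, hqF⟩), hqp⟩

lemma IsStdBasis.exists_mmonDvd {abv : AbsoluteValue K ℝ} {m : ℕ}
    {I : Set (Fin N → MvPowerSeries (Fin n) K)} {S : Fin m → Fin N → MvPowerSeries (Fin n) K}
    (hS : IsStdBasis abv I S) {p : (Fin n →₀ ℕ) × Fin N} (hp : monomialVec p ∈ leadingModule I) :
    ∃ j, ∃ p', IsLM (S j) p' ∧ MMonDvd p' p := by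
  rw [leadingModule_eq_span] at hp
  obtain ⟨q, ⟨g, hg, hgq⟩, hqp⟩ := exists_mmonDvd_of_monomialVec_mem_span hp
  obtain ⟨j, p', hp', hp'q⟩ := hS.2.2 g hg hgq.ne_zero q hgq
  exact ⟨j, p', hp', hp'q.trans hqp⟩

section Division

variable {m : ℕ} (S : Fin m → Fin N → MvPowerSeries (Fin n) K)
  (P : Fin m → (Fin n →₀ ℕ) × Fin N)

open Classical in
noncomputable def firstDivisor (p : (Fin n →₀ ℕ) × Fin N) : Option (Fin m) :=
  if h : ∃ j, MMonDvd (P j) p then some (Fin.find _ h) else none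

variable {P} in
lemma mmonDvd_of_firstDivisor_eq_some {p : (Fin n →₀ ℕ) × Fin N} {j : Fin m}
    (h : firstDivisor P p = some j) : MMonDvd (P j) p := by
  classical
  unfold firstDivisor at h
  split_ifs at h with hex
  · obtain rfl := Option.some.inj h
    exact Fin.find_spec hex

variable {P} in
lemma not_mmonDvd_of_firstDivisor_eq_none {p : (Fin n →₀ ℕ) × Fin N}
    (h : firstDivisor P p = none) (j : Fin m) : ¬ MMonDvd (P j) p := by
  intro hj
  unfold firstDivisor at h
  rw [dif_pos ⟨j, hj⟩] at h
  cases h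

noncomputable def leadCoeff (j : Fin m) : K := MvPowerSeries.coeff (P j).1 (S j (P j).2)

noncomputable def leadTerm (j : Fin m) : Fin N → MvPowerSeries (Fin n) K :=
  Pi.single (P j).2 (MvPowerSeries.monomial (P j).1 (leadCoeff S P j))

lemma leadTerm_add_tailOf (j : Fin m) : leadTerm S P j + tailOf (S j) (P j) = S j := by
  funext k
  by_cases hk : k = (P j).2
  · subst hk
    simp [leadTerm, tailOf, leadCoeff]
  · simp [leadTerm, tailOf, hk]

/-- The part of `h` whose monomials are assigned to `P j`, divided by the leading term of `S j`. -/
noncomputable def quotStep (h : Fin N → MvPowerSeries (Fin n) K) (j : Fin m) :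
    MvPowerSeries (Fin n) K :=
  fun γ => if firstDivisor P (γ + (P j).1, (P j).2) = some j then
    (leadCoeff S P j)⁻¹ * MvPowerSeries.coeff (γ + (P j).1) (h (P j).2) else 0

noncomputable def remStep (h : Fin N → MvPowerSeries (Fin n) K) : Fin N → MvPowerSeries (Fin n) K :=
  fun k β => if firstDivisor P (β, k) = none then MvPowerSeries.coeff β (h k) else 0

lemma coeff_quotStep (h : Fin N → MvPowerSeries (Fin n) K) (j : Fin m) (γ : Fin n →₀ ℕ) :
    MvPowerSeries.coeff γ (quotStep S P h j) =
      if firstDivisor P (γ + (P j).1, (P j).2) = some j then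
        (leadCoeff S P j)⁻¹ * MvPowerSeries.coeff (γ + (P j).1) (h (P j).2) else 0 :=
  rfl

lemma coeff_remStep (h : Fin N → MvPowerSeries (Fin n) K) (k : Fin N) (β : Fin n →₀ ℕ) :
    MvPowerSeries.coeff β (remStep P h k) =
      if firstDivisor P (β, k) = none then MvPowerSeries.coeff β (h k) else 0 :=
  rfl

lemma coeff_quotStep_mul_leadTerm {j : Fin m} (hlc : leadCoeff S P j ≠ 0)
    (h : Fin N → MvPowerSeries (Fin n) K) (k : Fin N) (β : Fin n →₀ ℕ) :
    MvPowerSeries.coeff β (quotStep S P h j * leadTerm S P j k) =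
      if firstDivisor P (β, k) = some j then MvPowerSeries.coeff β (h k) else 0 := by
  by_cases hk : k = (P j).2
  · subst hk
    rw [leadTerm, Pi.single_eq_same, MvPowerSeries.coeff_mul_monomial]
    split_ifs with hle hsel hsel
    · rw [coeff_quotStep, tsub_add_cancel_of_le hle, if_pos hsel, mul_comm, ← mul_assoc,
        mul_inv_cancel₀ hlc, one_mul]
    · rw [coeff_quotStep, tsub_add_cancel_of_le hle, if_neg hsel, zero_mul]
    · exact (hle (mmonDvd_of_firstDivisor_eq_some hsel).2).elim
    · rfl
  · rw [leadTerm, Pi.single_eq_of_ne hk, mul_zero, map_zero, if_neg]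
    exact fun hsel => hk (mmonDvd_of_firstDivisor_eq_some hsel).1.symm

lemma eq_sum_quotStep_mul_leadTerm_add_remStep (hlc : ∀ j, leadCoeff S P j ≠ 0)
    (h : Fin N → MvPowerSeries (Fin n) K) :
    h = (fun k => ∑ j, quotStep S P h j * leadTerm S P j k) + remStep P h := by
  funext k
  ext β
  rw [Pi.add_apply, map_add, map_sum]
  simp only [coeff_quotStep_mul_leadTerm S P (hlc _), coeff_remStep]
  rcases firstDivisor P (β, k) with _ | j <;> simp

noncomputable def nextStep (h : Fin N → MvPowerSeries (Fin n) K) :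
    Fin N → MvPowerSeries (Fin n) K :=
  fun k => -∑ j, quotStep S P h j * tailOf (S j) (P j) k

lemma eq_sum_quotStep_mul_add_remStep_add_nextStep (hlc : ∀ j, leadCoeff S P j ≠ 0)
    (h : Fin N → MvPowerSeries (Fin n) K) :
    h = (fun k => ∑ j, quotStep S P h j * S j k) + remStep P h + nextStep S P h := by
  have hS (j : Fin m) (k : Fin N) : quotStep S P h j * S j k =
      quotStep S P h j * leadTerm S P j k + quotStep S P h j * tailOf (S j) (P j) k := by
    rw [← mul_add, ← Pi.add_apply, leadTerm_add_tailOf]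
  conv_lhs => rw [eq_sum_quotStep_mul_leadTerm_add_remStep S P hlc h]
  funext k
  simp only [Pi.add_apply, nextStep, hS, Finset.sum_add_distrib]
  ring

lemma exists_mmonGT_of_coeff_nextStep_ne_zero (hLM : ∀ j, IsLM (S j) (P j))
    (h : Fin N → MvPowerSeries (Fin n) K) {q : (Fin n →₀ ℕ) × Fin N}
    (hq : MvPowerSeries.coeff q.1 (nextStep S P h q.2) ≠ 0) :
    ∃ p, MvPowerSeries.coeff p.1 (h p.2) ≠ 0 ∧ MMonGT p q := by
  obtain ⟨β, k⟩ := q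
  simp only [nextStep, map_neg, neg_ne_zero, map_sum] at hq
  obtain ⟨j, -, hj⟩ := Finset.exists_ne_zero_of_sum_ne_zero hq
  rw [MvPowerSeries.coeff_mul] at hj
  obtain ⟨⟨u, v⟩, huv, huv0⟩ := Finset.exists_ne_zero_of_sum_ne_zero hj
  rw [Finset.HasAntidiagonal.mem_antidiagonal] at huv
  have hu := left_ne_zero_of_mul huv0
  refine ⟨(u + (P j).1, (P j).2), ?_, ?_⟩
  · rw [coeff_quotStep] at hu
    split_ifs at hu
    · exact right_ne_zero_of_mul hu
    · exact (hu rfl).elim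
  · simpa [huv] using
      ((hLM j).mmonGT_of_coeff_tailOf_ne_zero (q := (v, k)) (right_ne_zero_of_mul huv0)).add_left u

lemma coeff_iterate_nextStep_eq_zero (hLM : ∀ j, IsLM (S j) (P j))
    (g : Fin N → MvPowerSeries (Fin n) K) {t : ℕ} {p : (Fin n →₀ ℕ) × Fin N} (ht : rank p < t) :
    MvPowerSeries.coeff p.1 ((nextStep S P)^[t] g p.2) = 0 := by
  induction t generalizing p with
  | zero => omega
  | succ t ih =>
    by_contra hne
    rw [Function.iterate_succ_apply'] at hne
    obtain ⟨p', hp', hgt⟩ := exists_mmonGT_of_coeff_nextStep_ne_zero S P hLM _ hne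
    exact hp' (ih (by have := rank_lt_rank hgt; omega))

noncomputable def quotUpTo (g : Fin N → MvPowerSeries (Fin n) K) (T : ℕ) (j : Fin m) :
    MvPowerSeries (Fin n) K :=
  ∑ t ∈ Finset.range T, quotStep S P ((nextStep S P)^[t] g) j

noncomputable def remUpTo (g : Fin N → MvPowerSeries (Fin n) K) (T : ℕ) :
    Fin N → MvPowerSeries (Fin n) K :=
  ∑ t ∈ Finset.range T, remStep P ((nextStep S P)^[t] g)

lemma eq_sum_quotUpTo_mul_add_remUpTo_add_iterate (hlc : ∀ j, leadCoeff S P j ≠ 0)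
    (g : Fin N → MvPowerSeries (Fin n) K) (T : ℕ) :
    g = (fun k => ∑ j, quotUpTo S P g T j * S j k) + remUpTo S P g T + (nextStep S P)^[T] g := by
  induction T with
  | zero =>
    funext k
    simp [quotUpTo, remUpTo]
  | succ T ih =>
    conv_lhs =>
      rw [ih, eq_sum_quotStep_mul_add_remStep_add_nextStep S P hlc ((nextStep S P)^[T] g)]
    rw [Function.iterate_succ_apply']
    funext k
    simp only [quotUpTo, remUpTo, Finset.sum_range_succ, Pi.add_apply, Finset.sum_apply, add_mul,
      Finset.sum_add_distrib]
    ring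

/-- The coefficient at `γ` of `quotUpTo S P g T j` no longer changes once
`T > rank (γ + (P j).1, (P j).2)` (`coeff_quotUpTo_eq_coeff_quot`); `quot` and `rem` are these
limits. -/
noncomputable def quot (g : Fin N → MvPowerSeries (Fin n) K) (j : Fin m) :
    MvPowerSeries (Fin n) K :=
  fun γ => MvPowerSeries.coeff γ (quotUpTo S P g (rank (γ + (P j).1, (P j).2) + 1) j)

noncomputable def rem (g : Fin N → MvPowerSeries (Fin n) K) : Fin N → MvPowerSeries (Fin n) K :=
  fun k β => MvPowerSeries.coeff β (remUpTo S P g (rank (β, k) + 1) k)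

lemma coeff_quotUpTo_eq_coeff_quot (hLM : ∀ j, IsLM (S j) (P j))
    (g : Fin N → MvPowerSeries (Fin n) K) (j : Fin m) (γ : Fin n →₀ ℕ) {T : ℕ}
    (hT : rank (γ + (P j).1, (P j).2) < T) :
    MvPowerSeries.coeff γ (quotUpTo S P g T j) = MvPowerSeries.coeff γ (quot S P g j) := by
  change _ = MvPowerSeries.coeff γ (quotUpTo S P g (rank (γ + (P j).1, (P j).2) + 1) j)
  simp only [quotUpTo, map_sum]
  refine Finset.eventually_constant_sum (fun t ht => ?_) hT
  rw [coeff_quotStep, coeff_iterate_nextStep_eq_zero S P hLM g (p := (γ + (P j).1, (P j).2)) ht]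
  simp

lemma coeff_remUpTo_eq_coeff_rem (hLM : ∀ j, IsLM (S j) (P j))
    (g : Fin N → MvPowerSeries (Fin n) K) (k : Fin N) (β : Fin n →₀ ℕ) {T : ℕ}
    (hT : rank (β, k) < T) :
    MvPowerSeries.coeff β (remUpTo S P g T k) = MvPowerSeries.coeff β (rem S P g k) := by
  change _ = MvPowerSeries.coeff β (remUpTo S P g (rank (β, k) + 1) k)
  simp only [remUpTo, Finset.sum_apply, map_sum]
  refine Finset.eventually_constant_sum (fun t ht => ?_) hT
  rw [coeff_remStep, coeff_iterate_nextStep_eq_zero S P hLM g (p := (β, k)) ht]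
  simp

lemma eq_sum_quot_mul_add_rem (hLM : ∀ j, IsLM (S j) (P j))
    (g : Fin N → MvPowerSeries (Fin n) K) :
    g = (fun k => ∑ j, quot S P g j * S j k) + rem S P g := by
  funext k
  ext β
  have hquot (j : Fin m) (u : (Fin n →₀ ℕ) × (Fin n →₀ ℕ)) : ∀ᶠ T in Filter.atTop,
      MvPowerSeries.coeff u.1 (quotUpTo S P g T j) = MvPowerSeries.coeff u.1 (quot S P g j) :=
    (Filter.eventually_gt_atTop _).mono fun T hT => coeff_quotUpTo_eq_coeff_quot S P hLM g j _ hT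
  have hrem : ∀ᶠ T in Filter.atTop,
      MvPowerSeries.coeff β (remUpTo S P g T k) = MvPowerSeries.coeff β (rem S P g k) :=
    (Filter.eventually_gt_atTop _).mono fun T hT => coeff_remUpTo_eq_coeff_rem S P hLM g k β hT
  have hiter : ∀ᶠ T in Filter.atTop, MvPowerSeries.coeff β ((nextStep S P)^[T] g k) = 0 :=
    (Filter.eventually_gt_atTop _).mono fun T hT =>
      coeff_iterate_nextStep_eq_zero S P hLM g (p := (β, k)) hT
  obtain ⟨T, hq, hr, hz⟩ := ((Filter.eventually_all.2 fun j =>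
    (Filter.eventually_all_finset (Finset.HasAntidiagonal.antidiagonal β)).2
      fun u _ => hquot j u).and (hrem.and hiter)).exists
  have hlc (j : Fin m) : leadCoeff S P j ≠ 0 := (hLM j).1
  conv_lhs => rw [eq_sum_quotUpTo_mul_add_remUpTo_add_iterate S P hlc g T]
  simp only [Pi.add_apply, map_add, map_sum, MvPowerSeries.coeff_mul, hr, hz, add_zero]
  exact congrArg₂ _ (Finset.sum_congr rfl fun j _ => Finset.sum_congr rfl fun u hu => by
    rw [hq j u hu]) rfl

lemma not_mmonDvd_of_coeff_rem_ne_zero (g : Fin N → MvPowerSeries (Fin n) K)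
    {q : (Fin n →₀ ℕ) × Fin N} (hq : MvPowerSeries.coeff q.1 (rem S P g q.2) ≠ 0) (j : Fin m) :
    ¬ MMonDvd (P j) q := by
  change MvPowerSeries.coeff q.1 (remUpTo S P g _ q.2) ≠ 0 at hq
  simp only [remUpTo, Finset.sum_apply, map_sum] at hq
  obtain ⟨t, -, ht⟩ := Finset.exists_ne_zero_of_sum_ne_zero hq
  rw [coeff_remStep] at ht
  split_ifs at ht with hsel
  · exact not_mmonDvd_of_firstDivisor_eq_none hsel j
  · exact (ht rfl).elim

end Division

section Norms

variable (abv : AbsoluteValue K ℝ)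

lemma prod_pow_nonneg {ε : Fin n → ℝ} (hε : ∀ i, 0 ≤ ε i) (β : Fin n →₀ ℕ) :
    0 ≤ ∏ i, ε i ^ β i :=
  Finset.prod_nonneg fun i _ => pow_nonneg (hε i) _

lemma prod_pow_add (ε : Fin n → ℝ) (α β : Fin n →₀ ℕ) :
    ∏ i, ε i ^ (α + β) i = (∏ i, ε i ^ α i) * ∏ i, ε i ^ β i := by
  simp only [Finsupp.add_apply, pow_add, Finset.prod_mul_distrib]

lemma wnorm_mono {ε ε' : Fin n → ℝ} (hε : ∀ i, 0 ≤ ε i) (hεε' : ∀ i, ε i ≤ ε' i)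
    (f : MvPowerSeries (Fin n) K) : wnorm abv ε f ≤ wnorm abv ε' f :=
  ENNReal.tsum_le_tsum fun _ => ENNReal.ofReal_le_ofReal <| mul_le_mul_of_nonneg_left
    (Finset.prod_le_prod (fun i _ => pow_nonneg (hε i) _)
      fun i _ => pow_le_pow_left₀ (hε i) (hεε' i) _) (abv.nonneg _)

lemma wnorm_neg (ε : Fin n → ℝ) (f : MvPowerSeries (Fin n) K) :
    wnorm abv ε (-f) = wnorm abv ε f := by
  simp [wnorm]

lemma wnorm_add_le {ε : Fin n → ℝ} (hε : ∀ i, 0 ≤ ε i) (f g : MvPowerSeries (Fin n) K) :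
    wnorm abv ε (f + g) ≤ wnorm abv ε f + wnorm abv ε g := by
  rw [wnorm, wnorm, wnorm, ← ENNReal.tsum_add]
  refine ENNReal.tsum_le_tsum fun β => ?_
  have hw := prod_pow_nonneg hε β
  rw [← ENNReal.ofReal_add (mul_nonneg (abv.nonneg _) hw) (mul_nonneg (abv.nonneg _) hw),
    ← add_mul, map_add]
  exact ENNReal.ofReal_le_ofReal (mul_le_mul_of_nonneg_right (abv.add_le _ _) hw)

protected lemma ENNReal.tsum_mul_tsum_eq_tsum_sum_antidiagonal {A : Type*} [AddCommMonoid A]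
    [Finset.HasAntidiagonal A] (f g : A → ℝ≥0∞) :
    (∑' a, f a) * ∑' b, g b =
      ∑' n, ∑ kl ∈ Finset.HasAntidiagonal.antidiagonal n, f kl.1 * g kl.2 := by
  rw [← ENNReal.tsum_mul_right]
  simp_rw [← ENNReal.tsum_mul_left]
  rw [← ENNReal.tsum_prod, ← Finset.HasAntidiagonal.sigmaAntidiagonalEquivProd.tsum_eq,
    ENNReal.tsum_sigma']
  exact tsum_congr fun n => Finset.tsum_subtype _ (fun kl : A × A => f kl.1 * g kl.2)

lemma wnorm_mul_le {ε : Fin n → ℝ} (hε : ∀ i, 0 ≤ ε i) (f g : MvPowerSeries (Fin n) K) :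
    wnorm abv ε (f * g) ≤ wnorm abv ε f * wnorm abv ε g := by
  rw [wnorm, wnorm, wnorm, ENNReal.tsum_mul_tsum_eq_tsum_sum_antidiagonal]
  refine ENNReal.tsum_le_tsum fun β => ?_
  have hterm (u : Fin n →₀ ℕ) (a : K) : 0 ≤ abv a * ∏ i, ε i ^ u i :=
    mul_nonneg (abv.nonneg _) (prod_pow_nonneg hε u)
  rw [MvPowerSeries.coeff_mul]
  calc ENNReal.ofReal (abv (∑ uv ∈ Finset.HasAntidiagonal.antidiagonal β,
          MvPowerSeries.coeff uv.1 f * MvPowerSeries.coeff uv.2 g) * ∏ i, ε i ^ β i)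
      ≤ ENNReal.ofReal (∑ uv ∈ Finset.HasAntidiagonal.antidiagonal β,
          (abv (MvPowerSeries.coeff uv.1 f) * ∏ i, ε i ^ uv.1 i) *
            (abv (MvPowerSeries.coeff uv.2 g) * ∏ i, ε i ^ uv.2 i)) := by
        refine ENNReal.ofReal_le_ofReal ((mul_le_mul_of_nonneg_right (abv.sum_le _ _)
          (prod_pow_nonneg hε β)).trans_eq ?_)
        rw [Finset.sum_mul]
        refine Finset.sum_congr rfl fun uv huv => ?_
        rw [← Finset.HasAntidiagonal.mem_antidiagonal.1 huv, prod_pow_add, abv.map_mul]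
        ring
    _ = _ := by
        rw [ENNReal.ofReal_sum_of_nonneg fun uv _ => mul_nonneg (hterm _ _) (hterm _ _)]
        exact Finset.sum_congr rfl fun uv _ => ENNReal.ofReal_mul (hterm _ _)

lemma ofReal_mul_wnorm_le_of_shift {ε : Fin n → ℝ} (hε : ∀ i, 0 ≤ ε i) {c : ℝ} (hc : 0 ≤ c)
    (α : Fin n →₀ ℕ) {f g : MvPowerSeries (Fin n) K}
    (h : ∀ γ, c * abv (MvPowerSeries.coeff γ f) ≤ abv (MvPowerSeries.coeff (γ + α) g)) :
    ENNReal.ofReal (c * ∏ i, ε i ^ α i) * wnorm abv ε f ≤ wnorm abv ε g := by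
  rw [wnorm, ← ENNReal.tsum_mul_left]
  refine le_trans ?_ (ENNReal.tsum_comp_le_tsum_of_injective (add_left_injective α)
    fun β => ENNReal.ofReal (abv (MvPowerSeries.coeff β g) * ∏ i, ε i ^ β i))
  refine ENNReal.tsum_le_tsum fun γ => ?_
  rw [← ENNReal.ofReal_mul (mul_nonneg hc (prod_pow_nonneg hε α))]
  refine ENNReal.ofReal_le_ofReal ?_
  calc c * (∏ i, ε i ^ α i) * (abv (MvPowerSeries.coeff γ f) * ∏ i, ε i ^ γ i)
      = c * abv (MvPowerSeries.coeff γ f) * ∏ i, ε i ^ (γ + α) i := by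
        rw [prod_pow_add]
        ring
    _ ≤ _ := mul_le_mul_of_nonneg_right (h γ) (prod_pow_nonneg hε _)

lemma wnorm_le_wnorm_of_abv_coeff_le {ε : Fin n → ℝ} (hε : ∀ i, 0 ≤ ε i)
    {f g : MvPowerSeries (Fin n) K}
    (h : ∀ γ, abv (MvPowerSeries.coeff γ f) ≤ abv (MvPowerSeries.coeff γ g)) :
    wnorm abv ε f ≤ wnorm abv ε g := by
  simpa using ofReal_mul_wnorm_le_of_shift abv hε zero_le_one 0 (g := g) (by simpa using h)

lemma wnorm_le_tsum_of_abv_coeff_le (ε : Fin n → ℝ) {f : MvPowerSeries (Fin n) K}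
    {F : ℕ → MvPowerSeries (Fin n) K}
    (h : ∀ γ, ENNReal.ofReal (abv (MvPowerSeries.coeff γ f)) ≤
      ∑' t, ENNReal.ofReal (abv (MvPowerSeries.coeff γ (F t)))) :
    wnorm abv ε f ≤ ∑' t, wnorm abv ε (F t) := by
  simp only [wnorm, ENNReal.ofReal_mul (abv.nonneg _)]
  calc ∑' γ, ENNReal.ofReal (abv (MvPowerSeries.coeff γ f)) * ENNReal.ofReal (∏ i, ε i ^ γ i)
      ≤ ∑' γ, (∑' t, ENNReal.ofReal (abv (MvPowerSeries.coeff γ (F t)))) *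
          ENNReal.ofReal (∏ i, ε i ^ γ i) :=
        ENNReal.tsum_le_tsum fun γ => mul_le_mul_left (h γ) _
    _ = _ := by
        simp_rw [← ENNReal.tsum_mul_right]
        exact ENNReal.tsum_comm

lemma ofReal_abv_sum_le_tsum (s : Finset ℕ) (x : ℕ → K) :
    ENNReal.ofReal (abv (∑ t ∈ s, x t)) ≤ ∑' t, ENNReal.ofReal (abv (x t)) :=
  calc ENNReal.ofReal (abv (∑ t ∈ s, x t)) ≤ ENNReal.ofReal (∑ t ∈ s, abv (x t)) :=
        ENNReal.ofReal_le_ofReal (abv.sum_le _ _)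
    _ = ∑ t ∈ s, ENNReal.ofReal (abv (x t)) :=
        ENNReal.ofReal_sum_of_nonneg fun _ _ => abv.nonneg _
    _ ≤ _ := ENNReal.sum_le_tsum _

/-- Weighting the `k`-th component by `r ^ k` lets the norm see the tie break between
components in `MMonGT`. -/
noncomputable def vnormWith (ε : Fin n → ℝ) (r : ℝ≥0∞) (h : Fin N → MvPowerSeries (Fin n) K) :
    ℝ≥0∞ :=
  ∑ k : Fin N, r ^ (k : ℕ) * wnorm abv ε (h k)

noncomputable def monWeight (ε : Fin n → ℝ) (r : ℝ≥0∞) (p : (Fin n →₀ ℕ) × Fin N) : ℝ≥0∞ :=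
  r ^ (p.2 : ℕ) * ENNReal.ofReal (∏ i, ε i ^ p.1 i)

lemma vnormWith_le_vnorm {ε ε' : Fin n → ℝ} (hε : ∀ i, 0 ≤ ε i) (hεε' : ∀ i, ε i ≤ ε' i)
    {r : ℝ≥0∞} (hr : r ≤ 1) (h : Fin N → MvPowerSeries (Fin n) K) :
    vnormWith abv ε r h ≤ vnorm abv ε' h :=
  Finset.sum_le_sum fun _ _ => (mul_le_of_le_one_left' (pow_le_one₀ zero_le hr)).trans
    (wnorm_mono abv hε hεε' _)

lemma vnormWith_add_le {ε : Fin n → ℝ} (hε : ∀ i, 0 ≤ ε i) (r : ℝ≥0∞)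
    (h h' : Fin N → MvPowerSeries (Fin n) K) :
    vnormWith abv ε r (h + h') ≤ vnormWith abv ε r h + vnormWith abv ε r h' := by
  rw [vnormWith, vnormWith, vnormWith, ← Finset.sum_add_distrib]
  exact Finset.sum_le_sum fun k _ => (mul_le_mul_right (wnorm_add_le abv hε _ _) _).trans_eq
    (mul_add _ _ _)

lemma vnormWith_sum_le {ι : Type*} {ε : Fin n → ℝ} (hε : ∀ i, 0 ≤ ε i) (r : ℝ≥0∞)
    (s : Finset ι) (F : ι → Fin N → MvPowerSeries (Fin n) K) :
    vnormWith abv ε r (∑ i ∈ s, F i) ≤ ∑ i ∈ s, vnormWith abv ε r (F i) :=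
  Finset.le_sum_of_subadditive _ (by simp [vnormWith, wnorm]) (vnormWith_add_le abv hε r) s F

lemma vnormWith_mul_le {ε : Fin n → ℝ} (hε : ∀ i, 0 ≤ ε i) (r : ℝ≥0∞)
    (a : MvPowerSeries (Fin n) K) (h : Fin N → MvPowerSeries (Fin n) K) :
    vnormWith abv ε r (fun k => a * h k) ≤ wnorm abv ε a * vnormWith abv ε r h := by
  rw [vnormWith, vnormWith, Finset.mul_sum]
  refine Finset.sum_le_sum fun k _ => ?_
  calc r ^ (k : ℕ) * wnorm abv ε (a * h k) ≤ r ^ (k : ℕ) * (wnorm abv ε a * wnorm abv ε (h k)) :=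
        mul_le_mul_right (wnorm_mul_le abv hε _ _) _
    _ = _ := by ring

lemma vnormWith_neg (ε : Fin n → ℝ) (r : ℝ≥0∞) (h : Fin N → MvPowerSeries (Fin n) K) :
    vnormWith abv ε r (-h) = vnormWith abv ε r h := by
  simp [vnormWith, wnorm_neg]

lemma pow_mul_wnorm_le_vnormWith (ε : Fin n → ℝ) (r : ℝ≥0∞) (h : Fin N → MvPowerSeries (Fin n) K)
    (k : Fin N) : r ^ (k : ℕ) * wnorm abv ε (h k) ≤ vnormWith abv ε r h :=
  Finset.single_le_sum (f := fun k : Fin N => r ^ (k : ℕ) * wnorm abv ε (h k)) (fun _ _ => zero_le)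
    (Finset.mem_univ k)

end Norms

section Estimates

variable (abv : AbsoluteValue K ℝ) {m : ℕ} (S : Fin m → Fin N → MvPowerSeries (Fin n) K)
  (P : Fin m → (Fin n →₀ ℕ) × Fin N) {ε : Fin n → ℝ} (r : ℝ≥0∞)

lemma ofReal_mul_monWeight_mul_wnorm_quotStep_le (hε : ∀ i, 0 ≤ ε i) {j : Fin m}
    (hlc : leadCoeff S P j ≠ 0) (h : Fin N → MvPowerSeries (Fin n) K) :
    ENNReal.ofReal (abv (leadCoeff S P j)) * monWeight ε r (P j) * wnorm abv ε (quotStep S P h j) ≤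
      vnormWith abv ε r h := by
  refine le_trans ?_ (pow_mul_wnorm_le_vnormWith abv ε r h (P j).2)
  have hshift := ofReal_mul_wnorm_le_of_shift abv hε (abv.nonneg (leadCoeff S P j)) (P j).1
    (f := quotStep S P h j) (g := h (P j).2) fun γ => by
      rw [coeff_quotStep]
      split_ifs
      · rw [abv.map_mul, map_inv₀, ← mul_assoc, mul_inv_cancel₀ (abv.ne_zero hlc), one_mul]
      · simp
  rw [ENNReal.ofReal_mul (abv.nonneg _)] at hshift
  calc _ = r ^ ((P j).2 : ℕ) * (ENNReal.ofReal (abv (leadCoeff S P j)) *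
        ENNReal.ofReal (∏ i, ε i ^ (P j).1 i) * wnorm abv ε (quotStep S P h j)) := by
        rw [monWeight]
        ring
    _ ≤ _ := mul_le_mul_right hshift _

lemma vnormWith_remStep_le (hε : ∀ i, 0 ≤ ε i) (h : Fin N → MvPowerSeries (Fin n) K) :
    vnormWith abv ε r (remStep P h) ≤ vnormWith abv ε r h :=
  Finset.sum_le_sum fun k _ => mul_le_mul_right (wnorm_le_wnorm_of_abv_coeff_le abv hε fun β => by
    rw [coeff_remStep]
    split_ifs <;> simp) _

lemma vnormWith_nextStep_le_sum (hε : ∀ i, 0 ≤ ε i) (h : Fin N → MvPowerSeries (Fin n) K) :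
    vnormWith abv ε r (nextStep S P h) ≤
      ∑ j, wnorm abv ε (quotStep S P h j) * vnormWith abv ε r (tailOf (S j) (P j)) := by
  have : nextStep S P h = -∑ j, fun k => quotStep S P h j * tailOf (S j) (P j) k := by
    funext k
    simp [nextStep]
  rw [this, vnormWith_neg]
  exact (vnormWith_sum_le abv hε r _ _).trans
    (Finset.sum_le_sum fun j _ => vnormWith_mul_le abv hε r _ _)

/-- The factor `2 * m` makes `nextStep S P` a contraction by `1 / 2` for `vnormWith abv ε r`
(`vnormWith_nextStep_le`). -/
def TailsSmall (ε : Fin n → ℝ) (r : ℝ≥0∞) : Prop :=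
  ∀ j, vnormWith abv ε r (tailOf (S j) (P j)) * (2 * m) ≤
    ENNReal.ofReal (abv (leadCoeff S P j)) * monWeight ε r (P j)

variable {abv S P r}

lemma vnormWith_nextStep_le (hε : ∀ i, 0 ≤ ε i) (hlc : ∀ j, leadCoeff S P j ≠ 0)
    (hsmall : TailsSmall abv S P ε r) (h : Fin N → MvPowerSeries (Fin n) K) :
    vnormWith abv ε r (nextStep S P h) ≤ 2⁻¹ * vnormWith abv ε r h := by
  rcases Nat.eq_zero_or_pos m with rfl | hm
  · simp [nextStep, vnormWith, wnorm]
  have hm0 : (m : ℝ≥0∞) ≠ 0 := by exact_mod_cast hm.ne'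
  have hm2 : (m : ℝ≥0∞) * (2 * vnormWith abv ε r (nextStep S P h)) ≤
      (m : ℝ≥0∞) * vnormWith abv ε r h :=
    calc (m : ℝ≥0∞) * (2 * vnormWith abv ε r (nextStep S P h))
        = vnormWith abv ε r (nextStep S P h) * (2 * m) := by ring
      _ ≤ (∑ j, wnorm abv ε (quotStep S P h j) * vnormWith abv ε r (tailOf (S j) (P j))) *
          (2 * m) := mul_le_mul_left (vnormWith_nextStep_le_sum abv S P r hε h) _
      _ ≤ ∑ j, wnorm abv ε (quotStep S P h j) *
          (ENNReal.ofReal (abv (leadCoeff S P j)) * monWeight ε r (P j)) := by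
        rw [Finset.sum_mul]
        exact Finset.sum_le_sum fun j _ => (mul_assoc _ _ _).trans_le
          (mul_le_mul_right (hsmall j) _)
      _ ≤ ∑ _j : Fin m, vnormWith abv ε r h := Finset.sum_le_sum fun j _ =>
          (mul_comm _ _).trans_le
            (ofReal_mul_monWeight_mul_wnorm_quotStep_le abv S P r hε (hlc j) h)
      _ = (m : ℝ≥0∞) * vnormWith abv ε r h := by simp
  rw [ENNReal.mul_le_mul_iff_right hm0 (ENNReal.natCast_ne_top m)] at hm2
  exact (ENNReal.mul_le_iff_le_inv two_ne_zero ENNReal.ofNat_ne_top).1 hm2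

lemma vnormWith_iterate_nextStep_le (hε : ∀ i, 0 ≤ ε i) (hlc : ∀ j, leadCoeff S P j ≠ 0)
    (hsmall : TailsSmall abv S P ε r) (g : Fin N → MvPowerSeries (Fin n) K) (t : ℕ) :
    vnormWith abv ε r ((nextStep S P)^[t] g) ≤ 2⁻¹ ^ t * vnormWith abv ε r g := by
  induction t with
  | zero => simp
  | succ t ih =>
    rw [Function.iterate_succ_apply', pow_succ', mul_assoc]
    exact (vnormWith_nextStep_le hε hlc hsmall _).trans (mul_le_mul_right ih _)

lemma tsum_vnormWith_iterate_nextStep_le (hε : ∀ i, 0 ≤ ε i) (hlc : ∀ j, leadCoeff S P j ≠ 0)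
    (hsmall : TailsSmall abv S P ε r) (g : Fin N → MvPowerSeries (Fin n) K) :
    ∑' t, vnormWith abv ε r ((nextStep S P)^[t] g) ≤ 2 * vnormWith abv ε r g :=
  calc ∑' t, vnormWith abv ε r ((nextStep S P)^[t] g)
      ≤ ∑' t, 2⁻¹ ^ t * vnormWith abv ε r g :=
        ENNReal.tsum_le_tsum (vnormWith_iterate_nextStep_le hε hlc hsmall g)
    _ = 2 * vnormWith abv ε r g := by
        rw [ENNReal.tsum_mul_right, ENNReal.tsum_geometric, ENNReal.one_sub_inv_two, inv_inv]

lemma ofReal_mul_monWeight_mul_wnorm_quot_le (hε : ∀ i, 0 ≤ ε i)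
    (hLM : ∀ j, IsLM (S j) (P j)) (hsmall : TailsSmall abv S P ε r)
    (g : Fin N → MvPowerSeries (Fin n) K) (j : Fin m) :
    ENNReal.ofReal (abv (leadCoeff S P j)) * monWeight ε r (P j) * wnorm abv ε (quot S P g j) ≤
      2 * vnormWith abv ε r g := by
  have hquot : wnorm abv ε (quot S P g j) ≤
      ∑' t, wnorm abv ε (quotStep S P ((nextStep S P)^[t] g) j) :=
    wnorm_le_tsum_of_abv_coeff_le abv ε fun γ => by
      change ENNReal.ofReal (abv (MvPowerSeries.coeff γ (quotUpTo S P g _ j))) ≤ _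
      rw [quotUpTo, map_sum]
      exact ofReal_abv_sum_le_tsum abv _ _
  calc _ ≤ ENNReal.ofReal (abv (leadCoeff S P j)) * monWeight ε r (P j) *
        ∑' t, wnorm abv ε (quotStep S P ((nextStep S P)^[t] g) j) := mul_le_mul_right hquot _
    _ = ∑' t, ENNReal.ofReal (abv (leadCoeff S P j)) * monWeight ε r (P j) *
        wnorm abv ε (quotStep S P ((nextStep S P)^[t] g) j) := ENNReal.tsum_mul_left.symm
    _ ≤ ∑' t, vnormWith abv ε r ((nextStep S P)^[t] g) := ENNReal.tsum_le_tsum fun t =>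
        ofReal_mul_monWeight_mul_wnorm_quotStep_le abv S P r hε (hLM j).1 _
    _ ≤ _ := tsum_vnormWith_iterate_nextStep_le hε (fun j => (hLM j).1) hsmall g

lemma vnormWith_rem_le (hε : ∀ i, 0 ≤ ε i) (hLM : ∀ j, IsLM (S j) (P j))
    (hsmall : TailsSmall abv S P ε r) (g : Fin N → MvPowerSeries (Fin n) K) :
    vnormWith abv ε r (rem S P g) ≤ 2 * vnormWith abv ε r g := by
  have hrem (k : Fin N) : wnorm abv ε (rem S P g k) ≤
      ∑' t, wnorm abv ε (remStep P ((nextStep S P)^[t] g) k) :=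
    wnorm_le_tsum_of_abv_coeff_le abv ε fun β => by
      change ENNReal.ofReal (abv (MvPowerSeries.coeff β (remUpTo S P g _ k))) ≤ _
      rw [remUpTo, Finset.sum_apply, map_sum]
      exact ofReal_abv_sum_le_tsum abv _ _
  calc vnormWith abv ε r (rem S P g)
      ≤ ∑ k : Fin N, ∑' t, r ^ (k : ℕ) * wnorm abv ε (remStep P ((nextStep S P)^[t] g) k) :=
        Finset.sum_le_sum fun k _ => (mul_le_mul_right (hrem k) _).trans_eq
          ENNReal.tsum_mul_left.symm
    _ = ∑' t, vnormWith abv ε r (remStep P ((nextStep S P)^[t] g)) :=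
        (Summable.tsum_finsetSum fun _ _ => ENNReal.summable).symm
    _ ≤ ∑' t, vnormWith abv ε r ((nextStep S P)^[t] g) :=
        ENNReal.tsum_le_tsum fun t => vnormWith_remStep_le abv P r hε _
    _ ≤ _ := tsum_vnormWith_iterate_nextStep_le hε (fun j => (hLM j).1) hsmall g

theorem isConv_quot_and_isConvV_rem (hε : ∀ i, 0 < ε i) (hr : r ≠ 0)
    (hLM : ∀ j, IsLM (S j) (P j)) (hsmall : TailsSmall abv S P ε r)
    {g : Fin N → MvPowerSeries (Fin n) K} (hg : vnormWith abv ε r g < ⊤) :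
    (∀ j, IsConv abv (quot S P g j)) ∧ IsConvV abv (rem S P g) := by
  have hε' (i : Fin n) : 0 ≤ ε i := (hε i).le
  have h2g : 2 * vnormWith abv ε r g < ⊤ := ENNReal.mul_lt_top ENNReal.ofNat_lt_top hg
  refine ⟨fun j => ⟨ε, hε, ENNReal.lt_top_of_mul_ne_top_right
    ((ofReal_mul_monWeight_mul_wnorm_quot_le hε' hLM hsmall g j).trans_lt h2g).ne ?_⟩,
    ε, hε, ENNReal.sum_lt_top.2 fun k _ => ENNReal.lt_top_of_mul_ne_top_right
      ((pow_mul_wnorm_le_vnormWith abv ε r _ k).trans_lt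
        ((vnormWith_rem_le hε' hLM hsmall g).trans_lt h2g)).ne (pow_ne_zero _ hr)⟩
  refine mul_ne_zero (ENNReal.ofReal_pos.2 (abv.pos (hLM j).1)).ne'
    (mul_ne_zero (pow_ne_zero _ hr) (ENNReal.ofReal_pos.2 ?_).ne')
  exact Finset.prod_pos fun i _ => pow_pos (hε i) _

end Estimates

section Weights

/-- Exponents of degree at most `d` are read as the digits of a number in base `d + 1`, the
first variable being the most significant. -/
lemma sum_pow_rev_mul_lt_of_toLex_lt {d : ℕ} {α β : Fin n →₀ ℕ} (hα : deg α ≤ d)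
    (h : toLex α < toLex β) :
    ∑ i, (d + 1) ^ (i.rev : ℕ) * α i < ∑ i, (d + 1) ^ (i.rev : ℕ) * β i := by
  obtain ⟨l, hl, hlt⟩ := Finsupp.Lex.lt_iff.1 h
  simp only [ofLex_toLex] at hl hlt
  set w : Fin n → ℕ := fun i => (d + 1) ^ (i.rev : ℕ)
  have hwl : 0 < w l := by positivity
  have hw {i : Fin n} (hi : l < i) : w i * (d + 1) ≤ w l := by
    rw [← pow_succ]
    exact Nat.pow_le_pow_right (Nat.succ_pos d) (Fin.rev_lt_rev.2 hi)
  have htail : (∑ i, if l < i then w i * α i else 0) < w l := by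
    refine Nat.lt_of_mul_lt_mul_right (a := d + 1) ?_
    calc (∑ i, if l < i then w i * α i else 0) * (d + 1)
        ≤ ∑ i, w l * α i := by
          rw [Finset.sum_mul]
          refine Finset.sum_le_sum fun i _ => ?_
          split_ifs with hi
          · nlinarith [hw hi]
          · simp
      _ = w l * deg α := by rw [← Finset.mul_sum, deg_eq_sum]
      _ ≤ w l * d := Nat.mul_le_mul_left _ hα
      _ < w l * (d + 1) := by nlinarith
  have hpt (i : Fin n) : w i * α i + (if i = l then w l else 0) ≤
      w i * β i + (if l < i then w i * α i else 0) := by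
    rcases lt_trichotomy i l with hi | rfl | hi
    · simp [hi.ne, not_lt.2 hi.le, hl i hi]
    · simp only [if_true, lt_irrefl, if_false, add_zero]
      nlinarith
    · simp [hi, hi.ne']
  have hsum := Finset.sum_le_sum fun i (_ : i ∈ Finset.univ) => hpt i
  simp only [Finset.sum_add_distrib, Finset.sum_ite_eq', Finset.mem_univ, if_true] at hsum
  show ∑ i, w i * α i < ∑ i, w i * β i
  omega

def weightOf (c : Fin n → ℕ) (p : (Fin n →₀ ℕ) × Fin N) : ℕ := ∑ i, c i * p.1 i + p.2

/-- The degree gets a weight beating everything else, the digits of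
`sum_pow_rev_mul_lt_of_toLex_lt` come next, and the component index last. -/
lemma exists_weightOf_lt_of_mmonGT (d : ℕ) :
    ∃ c : Fin n → ℕ, ∀ p q : (Fin n →₀ ℕ) × Fin N, deg p.1 ≤ d → MMonGT p q →
      weightOf c p < weightOf c q := by
  set L : (Fin n →₀ ℕ) → ℕ := fun β => ∑ i, (d + 1) ^ (i.rev : ℕ) * β i
  set C := N * (d * (d + 1) ^ n + 1)
  set c : Fin n → ℕ := fun i => N * (d + 1) ^ (i.rev : ℕ) + C
  refine ⟨c, fun p q hp hpq => ?_⟩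
  have hweight (q : (Fin n →₀ ℕ) × Fin N) : weightOf c q = N * L q.1 + C * deg q.1 + q.2 := by
    simp only [weightOf, c, L, deg_eq_sum, add_mul, mul_assoc, Finset.sum_add_distrib,
      Finset.mul_sum]
  have hL : L p.1 ≤ d * (d + 1) ^ n := by
    calc L p.1 ≤ ∑ i, (d + 1) ^ n * p.1 i := Finset.sum_le_sum fun i _ =>
          Nat.mul_le_mul_right _ (Nat.pow_le_pow_right (Nat.succ_pos d) (Fin.rev i).is_lt.le)
      _ = (d + 1) ^ n * deg p.1 := by rw [← Finset.mul_sum, deg_eq_sum]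
      _ ≤ _ := by rw [mul_comm]; exact Nat.mul_le_mul_right _ hp
  have hk (q : (Fin n →₀ ℕ) × Fin N) : (q.2 : ℕ) < N := q.2.is_lt
  rw [hweight, hweight]
  rcases hpq with (hdeg | ⟨hdeg, hlex⟩) | ⟨h1, h2⟩
  · have hC : N * L p.1 + p.2 < C :=
      calc N * L p.1 + p.2 < N * L p.1 + N := by have := hk p; omega
        _ ≤ N * (d * (d + 1) ^ n) + N := by have := Nat.mul_le_mul_left N hL; omega
        _ = C := by ring
    calc N * L p.1 + C * deg p.1 + p.2 < C * (deg p.1 + 1) := by rw [mul_add, mul_one]; omega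
      _ ≤ C * deg q.1 := Nat.mul_le_mul_left _ hdeg
      _ ≤ _ := by omega
  · have hLpq : L p.1 < L q.1 := sum_pow_rev_mul_lt_of_toLex_lt hp (Finsupp.Lex.lt_iff.2 hlex)
    rw [hdeg]
    calc N * L p.1 + C * deg q.1 + p.2 < N * (L p.1 + 1) + C * deg q.1 := by
          have := hk p; rw [mul_add, mul_one]; omega
      _ ≤ N * L q.1 + C * deg q.1 := Nat.add_le_add_right (Nat.mul_le_mul_left N hLpq) _
      _ ≤ _ := by omega
  · rw [h1]
    exact Nat.add_lt_add_left h2 _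

lemma prod_mul_pow_pow (ε₀ : Fin n → ℝ) (t : ℝ) (c : Fin n → ℕ) (β : Fin n →₀ ℕ) :
    ∏ i, (ε₀ i * t ^ c i) ^ β i = (∏ i, ε₀ i ^ β i) * t ^ ∑ i, c i * β i := by
  simp only [mul_pow, ← pow_mul, Finset.prod_mul_distrib, Finset.prod_pow_eq_pow_sum]

lemma monWeight_mul_pow {ε₀ : Fin n → ℝ} (hε₀ : ∀ i, 0 ≤ ε₀ i) {t : ℝ} (ht : 0 ≤ t)
    (c : Fin n → ℕ) (p : (Fin n →₀ ℕ) × Fin N) :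
    monWeight (fun i => ε₀ i * t ^ c i) (ENNReal.ofReal t) p =
      ENNReal.ofReal (∏ i, ε₀ i ^ p.1 i) * ENNReal.ofReal t ^ weightOf c p := by
  rw [monWeight, prod_mul_pow_pow, ENNReal.ofReal_mul (prod_pow_nonneg hε₀ _),
    ENNReal.ofReal_pow ht, weightOf, pow_add]
  ring

variable (abv : AbsoluteValue K ℝ)

/-- With the weights `ε₀ᵢ tᶜⁱ` and `r = t`, a monomial of weight `w` is charged `tʷ`; the tail
of `f` only has monomials of larger weight than its leading monomial, hence gains a factor `t`. -/
lemma vnormWith_tailOf_le {ε₀ : Fin n → ℝ} (hε₀ : ∀ i, 0 ≤ ε₀ i) {t : ℝ} (ht₀ : 0 ≤ t)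
    (ht₁ : t ≤ 1) {f : Fin N → MvPowerSeries (Fin n) K} {p : (Fin n →₀ ℕ) × Fin N}
    (hf : IsLM f p) {c : Fin n → ℕ} (hc : ∀ q, MMonGT p q → weightOf c p < weightOf c q) :
    vnormWith abv (fun i => ε₀ i * t ^ c i) (ENNReal.ofReal t) (tailOf f p) ≤
      ENNReal.ofReal t ^ (weightOf c p + 1) * vnorm abv ε₀ f := by
  rw [vnormWith, vnorm, Finset.mul_sum]
  refine Finset.sum_le_sum fun k _ => ?_
  rw [wnorm, wnorm, ← ENNReal.tsum_mul_left, ← ENNReal.tsum_mul_left]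
  refine ENNReal.tsum_le_tsum fun β => ?_
  by_cases hz : MvPowerSeries.coeff β (tailOf f p k) = 0
  · simp [hz]
  have hgt : MMonGT p (β, k) := hf.mmonGT_of_coeff_tailOf_ne_zero hz
  have hcoeff : MvPowerSeries.coeff β (tailOf f p k) = MvPowerSeries.coeff β (f k) := by
    have := coeff_tailOf f p (β, k)
    rwa [if_neg fun h : ((β, k) : (Fin n →₀ ℕ) × Fin N) = p => MMonGT.irrefl p (h ▸ hgt)] at this
  have hnn : 0 ≤ abv (MvPowerSeries.coeff β (f k)) * ∏ i, ε₀ i ^ β i :=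
    mul_nonneg (abv.nonneg _) (prod_pow_nonneg hε₀ β)
  rw [hcoeff, prod_mul_pow_pow, ← mul_assoc, ENNReal.ofReal_mul hnn, ENNReal.ofReal_pow ht₀]
  calc ENNReal.ofReal t ^ (k : ℕ) * (ENNReal.ofReal (abv (MvPowerSeries.coeff β (f k)) *
        ∏ i, ε₀ i ^ β i) * ENNReal.ofReal t ^ ∑ i, c i * β i)
      = ENNReal.ofReal t ^ weightOf c (β, k) *
          ENNReal.ofReal (abv (MvPowerSeries.coeff β (f k)) * ∏ i, ε₀ i ^ β i) := by
        rw [weightOf, pow_add]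
        ring
    _ ≤ _ := mul_le_mul_left (pow_le_pow_of_le_one zero_le (ENNReal.ofReal_le_one.2 ht₁)
        (hc _ hgt)) _

lemma tailsSmall_mul_pow {m : ℕ} {S : Fin m → Fin N → MvPowerSeries (Fin n) K}
    {P : Fin m → (Fin n →₀ ℕ) × Fin N} (hLM : ∀ j, IsLM (S j) (P j)) {ε₀ : Fin n → ℝ}
    (hε₀ : ∀ i, 0 ≤ ε₀ i) {c : Fin n → ℕ}
    (hc : ∀ j q, MMonGT (P j) q → weightOf c (P j) < weightOf c q) {t : ℝ} (ht₀ : 0 ≤ t)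
    (ht₁ : t ≤ 1) (ht : ∀ j, ENNReal.ofReal t * (vnorm abv ε₀ (S j) * (2 * m)) ≤
      ENNReal.ofReal (abv (leadCoeff S P j)) * ENNReal.ofReal (∏ i, ε₀ i ^ (P j).1 i)) :
    TailsSmall abv S P (fun i => ε₀ i * t ^ c i) (ENNReal.ofReal t) := fun j =>
  calc vnormWith abv (fun i => ε₀ i * t ^ c i) (ENNReal.ofReal t) (tailOf (S j) (P j)) * (2 * m)
      ≤ ENNReal.ofReal t ^ (weightOf c (P j) + 1) * vnorm abv ε₀ (S j) * (2 * m) :=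
        mul_le_mul_left (vnormWith_tailOf_le abv hε₀ ht₀ ht₁ (hLM j) (hc j)) _
    _ = ENNReal.ofReal t ^ weightOf c (P j) *
          (ENNReal.ofReal t * (vnorm abv ε₀ (S j) * (2 * m))) := by ring
    _ ≤ ENNReal.ofReal t ^ weightOf c (P j) * (ENNReal.ofReal (abv (leadCoeff S P j)) *
          ENNReal.ofReal (∏ i, ε₀ i ^ (P j).1 i)) := mul_le_mul_right (ht j) _
    _ = _ := by
        rw [monWeight_mul_pow hε₀ ht₀]
        ring

end Weights

section Convergence

open scoped Topology

variable {abv : AbsoluteValue K ℝ}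

lemma IsConvV.eventually_vnorm_lt_top {f : Fin N → MvPowerSeries (Fin n) K}
    (hf : IsConvV abv f) : ∀ᶠ ε in Filter.pi fun _ : Fin n => 𝓝[>] (0 : ℝ), vnorm abv ε f < ⊤ := by
  obtain ⟨ε', hε', hf⟩ := hf
  filter_upwards [Filter.eventually_pi fun i => Ioc_mem_nhdsGT (hε' i)] with ε hε
  exact (Finset.sum_le_sum fun k _ =>
    wnorm_mono abv (fun i => (hε i).1.le) (fun i => (hε i).2) _).trans_lt hf

lemma eventually_ofReal_mul_lt {X Y : ℝ≥0∞} (hX : X ≠ ⊤) (hY : 0 < Y) :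
    ∀ᶠ t in 𝓝[>] (0 : ℝ), ENNReal.ofReal t * X < Y := by
  have h := ENNReal.Tendsto.mul_const
    ((ENNReal.continuous_ofReal.tendsto 0).mono_left (nhdsWithin_le_nhds (s := Set.Ioi 0)))
    (Or.inr hX)
  rw [ENNReal.ofReal_zero, zero_mul] at h
  exact h (gt_mem_nhds hY)

lemma exists_tailsSmall {m : ℕ} (S : Fin m → Fin N → MvPowerSeries (Fin n) K)
    (P : Fin m → (Fin n →₀ ℕ) × Fin N) (hLM : ∀ j, IsLM (S j) (P j))
    (hS : ∀ j, IsConvV abv (S j)) {g : Fin N → MvPowerSeries (Fin n) K} (hg : IsConvV abv g) :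
    ∃ (ε : Fin n → ℝ) (r : ℝ≥0∞), (∀ i, 0 < ε i) ∧ r ≠ 0 ∧ TailsSmall abv S P ε r ∧
      vnormWith abv ε r g < ⊤ := by
  obtain ⟨ε₀, hε₀, hg₀, hS₀⟩ : ∃ ε₀ : Fin n → ℝ, (∀ i, 0 < ε₀ i) ∧ vnorm abv ε₀ g < ⊤ ∧
      ∀ j, vnorm abv ε₀ (S j) < ⊤ :=
    ((Filter.eventually_pi fun _ => eventually_mem_nhdsWithin).and (hg.eventually_vnorm_lt_top.and
      (Filter.eventually_all.2 fun j => (hS j).eventually_vnorm_lt_top))).exists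
  obtain ⟨c, hc⟩ := exists_weightOf_lt_of_mmonGT (N := N) (Finset.univ.sup fun j => deg (P j).1)
  have hY (j : Fin m) : 0 < ENNReal.ofReal (abv (leadCoeff S P j)) *
      ENNReal.ofReal (∏ i, ε₀ i ^ (P j).1 i) :=
    ENNReal.mul_pos (ENNReal.ofReal_pos.2 (abv.pos (hLM j).1)).ne'
      (ENNReal.ofReal_pos.2 (Finset.prod_pos fun i _ => pow_pos (hε₀ i) _)).ne'
  have hX (j : Fin m) : vnorm abv ε₀ (S j) * (2 * m) ≠ ⊤ :=
    ENNReal.mul_ne_top (hS₀ j).ne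
      (ENNReal.mul_ne_top ENNReal.ofNat_ne_top (ENNReal.natCast_ne_top m))
  have hIoc : ∀ᶠ t in 𝓝[>] (0 : ℝ), t ∈ Set.Ioc 0 1 := Ioc_mem_nhdsGT one_pos
  obtain ⟨t, ⟨ht₀, ht₁⟩, ht⟩ := (hIoc.and
    (Filter.eventually_all.2 fun j => eventually_ofReal_mul_lt (hX j) (hY j))).exists
  have hε (i : Fin n) : 0 < ε₀ i * t ^ c i := mul_pos (hε₀ i) (pow_pos ht₀ _)
  refine ⟨fun i => ε₀ i * t ^ c i, ENNReal.ofReal t, hε, (ENNReal.ofReal_pos.2 ht₀).ne',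
    tailsSmall_mul_pow abv hLM (fun i => (hε₀ i).le) (fun j q => hc (P j) q
      (Finset.le_sup (f := fun j => deg (P j).1) (Finset.mem_univ j))) ht₀.le ht₁
      fun j => (ht j).le,
    (vnormWith_le_vnorm abv (fun i => (hε i).le)
      (fun i => mul_le_of_le_one_right (hε₀ i).le (pow_le_one₀ ht₀.le ht₁))
      (ENNReal.ofReal_le_one.2 ht₁) g).trans_lt hg₀⟩

theorem exists_isRemainder {m : ℕ} {S : Fin m → Fin N → MvPowerSeries (Fin n) K}
    (hS : ∀ j, IsConvV abv (S j)) (hS₀ : ∀ j, S j ≠ 0) {g : Fin N → MvPowerSeries (Fin n) K}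
    (hg : IsConvV abv g) : ∃ r, IsRemainder abv S g r := by
  choose P hP using fun j => exists_isLM (hS₀ j)
  obtain ⟨ε, r, hε, hr, hsmall, hgr⟩ := exists_tailsSmall S P hP hS hg
  obtain ⟨hq, hrem⟩ := isConv_quot_and_isConvV_rem hε hr hP hsmall hgr
  refine ⟨rem S P g, ⟨quot S P g, hq, eq_sum_quot_mul_add_rem S P hP g⟩, hrem,
    fun p hp j p' hp' => ?_⟩
  rw [← (hP j).unique hp']
  exact not_mmonDvd_of_coeff_rem_ne_zero S P g hp j

lemma IsConv.neg {f : MvPowerSeries (Fin n) K} (hf : IsConv abv f) : IsConv abv (-f) := by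
  obtain ⟨ε, hε, h⟩ := hf
  exact ⟨ε, hε, by rwa [wnorm_neg]⟩

lemma IsConvSubmodule.sum_mul_mem {I : Set (Fin N → MvPowerSeries (Fin n) K)}
    (hI : IsConvSubmodule abv I) {m : ℕ} {S : Fin m → Fin N → MvPowerSeries (Fin n) K}
    (hS : ∀ j, S j ∈ I) {q : Fin m → MvPowerSeries (Fin n) K} (hq : ∀ j, IsConv abv (q j)) :
    (fun k => ∑ j, q j * S j k) ∈ I := by
  suffices ∀ s : Finset (Fin m), (fun k => ∑ j ∈ s, q j * S j k) ∈ I from this Finset.univ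
  intro s
  induction s using Finset.induction_on with
  | empty =>
    convert hI.1
    funext k
    simp
  | insert a s ha ih =>
    simp_rw [Finset.sum_insert ha]
    exact hI.2.2.1 _ (hI.2.2.2 _ (hq a) _ (hS a)) _ ih

end Convergence

/-- Lemma 2.8 (2): if `I ⊆ J` are submodules of `K{x}^N` and
`L(I) = L(J)`, then `I = J`. -/
theorem eq_of_leadingModule_eq {K : Type} [Field K] (abv : AbsoluteValue K ℝ)
    {n N : ℕ} (I J : Set (Fin N → MvPowerSeries (Fin n) K))
    (hI : IsConvSubmodule abv I) (hJ : IsConvSubmodule abv J)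
    (hIJ : I ⊆ J) (hL : leadingModule I = leadingModule J) :
    I = J := by
  refine hIJ.antisymm fun g hg => ?_
  obtain ⟨m, S, hS⟩ := exists_isStdBasis abv I
  obtain ⟨r, ⟨q, hq, hgqr⟩, -, hrem⟩ :=
    exists_isRemainder (fun j => hI.2.1 _ (hS.1 j)) hS.2.1 (hJ.2.1 g hg)
  have hrJ : r ∈ J := by
    have hr : r = g + fun k => ∑ j, -q j * S j k := by
      funext k
      simp [hgqr]
    rw [hr]
    exact hJ.2.2.1 _ hg _ (hJ.sum_mul_mem (fun j => hIJ (hS.1 j)) fun j => (hq j).neg)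
  obtain rfl : r = 0 := by
    by_contra hr₀
    obtain ⟨p, hp⟩ := exists_isLM hr₀
    have hpI : monomialVec p ∈ leadingModule I := hL ▸ Submodule.subset_span ⟨r, hrJ, p, hp, rfl⟩
    obtain ⟨j, p', hp', hdvd⟩ := hS.exists_mmonDvd hpI
    exact hrem p hp.1 j p' hp' hdvd
  simpa [hgqr] using hI.sum_mul_mem hS.1 hq

end GrauertRVF
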